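/- For every octonion o and all reals α₁, α₂, α₃, one has (((o·e₂)·exp(−e₁α₁))·exp(−e₂α₂))·exp(−e₄α₃) = (((o·exp(e₁α₁))·exp(−e₂α₂))·exp(e₄α₃))·e₂, with products evaluated left to right. -/

import Mathlib

noncomputable section
open MeasureTheory Real

/-- Octonions as the Cayley–Dickson double of the quaternions:
pairs of quaternions with the Cayley–Dickson product `omul`.
(The additive, scalar and topological structure is the product structure.) -/
abbrev Octonion : Type := Quaternion ℝ × Quaternion ℝ

/-- Cayley–Dickson multiplication of octonions. -/
def omul (x y : Octonion) : Octonion :=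
  (x.1 * y.1 - star y.2 * x.2, y.2 * x.1 + x.2 * star y.1)

/-- The octonion `1`. -/
def oone : Octonion := (1, 0)

/-- Octonion conjugation. -/
def oconj (x : Octonion) : Octonion := (star x.1, -x.2)

/-- Real part of an octonion. -/
def ore (x : Octonion) : ℝ := x.1.re

/-- `o · o*`, as a real number (its imaginary part vanishes). -/
def onormSq (x : Octonion) : ℝ := ore (omul x (oconj x))

/-- The octonion norm `|o| = √(o·o*)`. -/
def oabs (x : Octonion) : ℝ := Real.sqrt (onormSq x)

/-- Inverse of a (nonzero) octonion. -/
def oinv (x : Octonion) : Octonion := (onormSq x)⁻¹ • oconj x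

def e1 : Octonion := ((⟨0,1,0,0⟩ : Quaternion ℝ), 0)
def e2 : Octonion := ((⟨0,0,1,0⟩ : Quaternion ℝ), 0)
def e3 : Octonion := ((⟨0,0,0,1⟩ : Quaternion ℝ), 0)
def e4 : Octonion := (0, (⟨1,0,0,0⟩ : Quaternion ℝ))
def e5 : Octonion := (0, (⟨0,1,0,0⟩ : Quaternion ℝ))
def e6 : Octonion := (0, (⟨0,0,1,0⟩ : Quaternion ℝ))
def e7 : Octonion := (0, (⟨0,0,0,1⟩ : Quaternion ℝ))

/-- Powers of an octonion (well defined since octonions are power-associative). -/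
def opow (o : Octonion) : ℕ → Octonion
  | 0 => oone
  | n + 1 => omul o (opow o n)

/-- The octonion exponential `exp o = ∑ oᵏ/k!`. -/
def octExp (o : Octonion) : Octonion :=
  ∑' k : ℕ, ((k.factorial : ℝ)⁻¹) • opow o k

/-- The octonion Fourier transform of `u : ℝ³ → 𝕆`,
with octonion products evaluated left to right. -/
def OFT (u : ℝ × ℝ × ℝ → Octonion) (f : ℝ × ℝ × ℝ) : Octonion :=
  ∫ x : ℝ × ℝ × ℝ,
    omul (omul (omul (u x) (octExp ((-(2 * π * f.1 * x.1)) • e1)))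
        (octExp ((-(2 * π * f.2.1 * x.2.1)) • e2)))
      (octExp ((-(2 * π * f.2.2 * x.2.2)) • e4))

/-! Expand `exp(αe) = cos α + e sin α`, valid whenever `e² = -1`. By bilinearity, the factor
`e₂` can then be carried to the right past `exp(αe)` once we know how it passes `e` itself:
`(w e₂) e = -(w e) e₂` for `e = e₁, e₄` (from the Cayley–Dickson formula, as the quaternion units
anticommute), which flips the sign of `α`, while for `e = e₂` nothing changes. -/

open scoped Quaternion

lemma omul_add (x y z : Octonion) : omul x (y + z) = omul x y + omul x z := by
  ext : 1 <;> simp only [omul, Prod.fst_add, Prod.snd_add, star_add, mul_add, add_mul] <;> abel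

lemma add_omul (x y z : Octonion) : omul (x + y) z = omul x z + omul y z := by
  ext : 1 <;> simp only [omul, Prod.fst_add, Prod.snd_add, mul_add, add_mul] <;> abel

lemma omul_smul (c : ℝ) (x y : Octonion) : omul x (c • y) = c • omul x y := by
  ext : 1 <;> simp [omul, smul_sub, smul_add]

lemma smul_omul (c : ℝ) (x y : Octonion) : omul (c • x) y = c • omul x y := by
  ext : 1 <;> simp [omul, smul_sub, smul_add]

lemma omul_neg (x y : Octonion) : omul x (-y) = -omul x y := by
  simpa using omul_smul (-1) x y

lemma neg_omul (x y : Octonion) : omul (-x) y = -omul x y := by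
  simpa using smul_omul (-1) x y

lemma omul_oone (x : Octonion) : omul x oone = x := by
  ext : 1 <;> simp [omul, oone]

lemma opow_smul (α : ℝ) (x : Octonion) (n : ℕ) : opow (α • x) n = α ^ n • opow x n := by
  induction n with
  | zero => simp [opow]
  | succ n ih => rw [opow, opow, ih, smul_omul, omul_smul, smul_smul, pow_succ']

section ImaginaryUnit

variable {e : Octonion} (he : omul e e = -oone)
include he

lemma opow_two_mul_of_omul_self (k : ℕ) : opow e (2 * k) = (-1 : ℝ) ^ k • oone := by
  induction k with
  | zero => simp [opow]
  | succ k ih =>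
    rw [Nat.mul_succ, opow, opow, ih, omul_smul, omul_smul, omul_oone, he, pow_succ, mul_smul,
      neg_one_smul]

lemma opow_two_mul_add_one_of_omul_self (k : ℕ) : opow e (2 * k + 1) = (-1 : ℝ) ^ k • e := by
  rw [opow, opow_two_mul_of_omul_self he, omul_smul, omul_oone]

lemma octExp_smul_of_omul_self (α : ℝ) :
    octExp (α • e) = Real.cos α • oone + Real.sin α • e := by
  refine HasSum.tsum_eq (HasSum.even_add_odd ?_ ?_)
  · convert (Real.hasSum_cos α).smul_const oone using 2 with k
    rw [opow_smul, opow_two_mul_of_omul_self he, smul_smul, smul_smul]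
    congr 1
    field_simp
  · convert (Real.hasSum_sin α).smul_const e using 2 with k
    rw [opow_smul, opow_two_mul_add_one_of_omul_self he, smul_smul, smul_smul]
    congr 1
    field_simp

end ImaginaryUnit

lemma omul_omul_octExp_of_anticomm {u e : Octonion} (he : omul e e = -oone)
    (hue : ∀ w, omul (omul w u) e = -omul (omul w e) u) (w : Octonion) (α : ℝ) :
    omul (omul w u) (octExp (α • e)) = omul (omul w (octExp ((-α) • e))) u := by
  rw [octExp_smul_of_omul_self he, octExp_smul_of_omul_self he, Real.cos_neg, Real.sin_neg]
  simp only [omul_add, add_omul, omul_smul, smul_omul, omul_oone, hue, neg_smul, omul_neg, neg_omul,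
    smul_neg]

lemma omul_omul_octExp_self {u : Octonion} (hu : omul u u = -oone) (w : Octonion) (α : ℝ) :
    omul (omul w u) (octExp (α • u)) = omul (omul w (octExp (α • u))) u := by
  simp only [octExp_smul_of_omul_self hu, omul_add, add_omul, omul_smul, smul_omul, omul_oone]

lemma omul_mk_zero_self {u : ℍ[ℝ]} (hu : u * u = -1) : omul (u, 0) (u, 0) = -oone := by
  ext : 1 <;> simp [omul, oone, hu]

lemma omul_zero_one_self : omul (0, 1) (0, 1) = -oone := by
  ext : 1 <;> simp [omul, oone]

lemma omul_omul_mk_zero_of_anticomm {u v : ℍ[ℝ]} (hu : star u = -u) (hv : star v = -v)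
    (huv : v * u = -(u * v)) (w : Octonion) :
    omul (omul w (u, 0)) (v, 0) = -omul (omul w (v, 0)) (u, 0) := by
  ext : 1 <;> simp [omul, hu, hv, mul_assoc, huv]

lemma omul_omul_zero_one {u : ℍ[ℝ]} (hu : star u = -u) (w : Octonion) :
    omul (omul w (u, 0)) (0, 1) = -omul (omul w (0, 1)) (u, 0) := by
  ext : 1 <;> simp [omul, hu]

-- `show` re-elaborates the literals of `e1`, `e2` so that `ext` and `simp` see the usual
-- quaternion instances.
lemma e1_fst_mul_self : e1.1 * e1.1 = -1 := by
  show (⟨0, 1, 0, 0⟩ : ℍ[ℝ]) * ⟨0, 1, 0, 0⟩ = -1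
  ext <;> simp

lemma e2_fst_mul_self : e2.1 * e2.1 = -1 := by
  show (⟨0, 0, 1, 0⟩ : ℍ[ℝ]) * ⟨0, 0, 1, 0⟩ = -1
  ext <;> simp

lemma star_e1_fst : star e1.1 = -e1.1 := by
  show star (⟨0, 1, 0, 0⟩ : ℍ[ℝ]) = -⟨0, 1, 0, 0⟩
  ext <;> simp

lemma star_e2_fst : star e2.1 = -e2.1 := by
  show star (⟨0, 0, 1, 0⟩ : ℍ[ℝ]) = -⟨0, 0, 1, 0⟩
  ext <;> simp

lemma e1_fst_mul_e2_fst : e1.1 * e2.1 = -(e2.1 * e1.1) := by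
  show (⟨0, 1, 0, 0⟩ : ℍ[ℝ]) * ⟨0, 0, 1, 0⟩ = -((⟨0, 0, 1, 0⟩ : ℍ[ℝ]) * ⟨0, 1, 0, 0⟩)
  ext <;> simp

lemma e1_omul_self : omul e1 e1 = -oone := omul_mk_zero_self e1_fst_mul_self

lemma e2_omul_self : omul e2 e2 = -oone := omul_mk_zero_self e2_fst_mul_self

lemma e4_omul_self : omul e4 e4 = -oone := omul_zero_one_self

lemma omul_e2_omul_e1 (w : Octonion) : omul (omul w e2) e1 = -omul (omul w e1) e2 :=
  omul_omul_mk_zero_of_anticomm star_e2_fst star_e1_fst e1_fst_mul_e2_fst w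

lemma omul_e2_omul_e4 (w : Octonion) : omul (omul w e2) e4 = -omul (omul w e4) e2 :=
  omul_omul_zero_one star_e2_fst w

theorem octonion_e2_commutation (o : Octonion) (α₁ α₂ α₃ : ℝ) :
    omul (omul (omul (omul o e2) (octExp ((-α₁) • e1))) (octExp ((-α₂) • e2)))
        (octExp ((-α₃) • e4)) =
      omul (omul (omul (omul o (octExp (α₁ • e1))) (octExp ((-α₂) • e2)))
        (octExp (α₃ • e4))) e2 := by
  rw [omul_omul_octExp_of_anticomm e1_omul_self omul_e2_omul_e1, neg_neg,
    omul_omul_octExp_self e2_omul_self,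
    omul_omul_octExp_of_anticomm e4_omul_self omul_e2_omul_e4, neg_neg]
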